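/- If X ⊆ ℝ^n is convex, each f_i : ℝ^n → ℝ is convex, and x* ∈ X is Pareto optimal, then there exist nonnegative weights w_1, …, w_N, not all zero, such that x* minimizes Σ_{i=1}^N w_i f_i(x) over X. -/
import Mathlib


/-- Converse to weighted-sum scalarization in the convex case: if `X` is convex, each `f i`
is convex on `ℝ^n`, and `xstar ∈ X` is Pareto optimal, then there exist nonnegative weights,
not all zero, such that `xstar` minimizes the weighted sum `∑ i, w i * f i x` over `X`. -/
theorem pareto_exists_weights_of_convex {n N : ℕ} (hN : 0 < N) (X : Set (Fin n → ℝ))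
    (hX : Convex ℝ X) (f : Fin N → (Fin n → ℝ) → ℝ)
    (hf : ∀ i, ConvexOn ℝ Set.univ (f i))
    (xstar : Fin n → ℝ) (hmem : xstar ∈ X)
    (hpareto : ¬ ∃ x ∈ X, (∀ i, f i x ≤ f i xstar) ∧ ∃ j, f j x < f j xstar) :
    ∃ w : Fin N → ℝ, (∀ i, 0 ≤ w i) ∧ w ≠ 0 ∧
      ∀ x ∈ X, ∑ i, w i * f i xstar ≤ ∑ i, w i * f i x := by
  classical
  set A : Set (Fin N → ℝ) := {z | ∃ x ∈ X, ∀ i, f i x - f i xstar < z i} with hA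
  -- A is convex
  have hAconv : Convex ℝ A := by
    rintro z1 ⟨x1, hx1, h1⟩ z2 ⟨x2, hx2, h2⟩ a b ha hb hab
    refine ⟨a • x1 + b • x2, hX hx1 hx2 ha hb hab, fun i => ?_⟩
    have hc := (hf i).2 (Set.mem_univ x1) (Set.mem_univ x2) ha hb hab
    have key : a * (f i x1 - f i xstar) + b * (f i x2 - f i xstar)
        < a * z1 i + b * z2 i := by
      rcases lt_or_eq_of_le ha with ha' | ha'
      · have := mul_lt_mul_of_pos_left (h1 i) ha'
        have h2' := mul_le_mul_of_nonneg_left (h2 i).le hb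
        linarith
      · subst ha'
        have := mul_lt_mul_of_pos_left (h2 i) (by linarith : (0:ℝ) < b)
        simpa using this
    simp only [smul_eq_mul] at hc
    simp only [Pi.add_apply, Pi.smul_apply, smul_eq_mul]
    have hid : a * f i xstar + b * f i xstar = f i xstar := by
      rw [← add_mul, hab, one_mul]
    linarith [key, hc, hid]
  -- A is open
  have hAopen : IsOpen A := by
    have : A = ⋃ x ∈ X, {z : Fin N → ℝ | ∀ i, f i x - f i xstar < z i} := by
      ext z; simp [hA]
    rw [this]
    refine isOpen_biUnion fun x _ => ?_
    have : {z : Fin N → ℝ | ∀ i, f i x - f i xstar < z i}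
        = ⋂ i, {z : Fin N → ℝ | f i x - f i xstar < z i} := by
      ext z; simp
    rw [this]
    exact isOpen_iInter_of_finite fun i =>
      isOpen_lt continuous_const (continuous_apply i)
  -- 0 ∉ A
  have h0 : (0 : Fin N → ℝ) ∉ A := by
    rintro ⟨x, hx, hlt⟩
    exact hpareto ⟨x, hx, fun i => by have := hlt i; simpa using this.le,
      ⟨⟨0, hN⟩, by have := hlt ⟨0, hN⟩; simpa using this⟩⟩
  obtain ⟨g, hg⟩ := geometric_hahn_banach_point_open hAconv hAopen h0
  simp only [map_zero] at hg
  -- representation of g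
  have grepr : ∀ z : Fin N → ℝ, g z = ∑ i, z i * g (Pi.single i 1) := by
    intro z
    have hz : z = ∑ i, z i • (Pi.single i (1:ℝ) : Fin N → ℝ) := by
      funext j
      simp [Finset.sum_apply, Pi.single_apply, Finset.sum_ite_eq, eq_comm]
    conv_lhs => rw [hz]
    rw [map_sum]
    simp [smul_eq_mul]
  set w : Fin N → ℝ := fun i => g (Pi.single i 1) with hw
  -- g is nonneg on closure of A
  have hclos : ∀ z ∈ closure A, 0 ≤ g z := by
    intro z hz
    have hsub : A ⊆ {z | 0 ≤ g z} := fun b hb => (hg b hb).le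
    have : closure A ⊆ {z | 0 ≤ g z} :=
      closure_minimal hsub (isClosed_le continuous_const g.continuous)
    exact this hz
  -- key: points dominating a feasible vector are in closure A
  have hmemclos : ∀ z : Fin N → ℝ, (∃ x ∈ X, ∀ i, f i x - f i xstar ≤ z i) →
      z ∈ closure A := by
    rintro z ⟨x, hx, hle⟩
    have htend : Filter.Tendsto (fun ε : ℝ => z + ε • (1 : Fin N → ℝ))
        (nhdsWithin 0 (Set.Ioi 0)) (nhds z) := by
      have : Filter.Tendsto (fun ε : ℝ => z + ε • (1 : Fin N → ℝ))
          (nhds 0) (nhds (z + (0:ℝ) • (1 : Fin N → ℝ))) := by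
        exact (tendsto_const_nhds.add ((continuous_id.smul continuous_const).tendsto 0))
      simpa using this.mono_left nhdsWithin_le_nhds
    refine mem_closure_of_tendsto htend ?_
    filter_upwards [self_mem_nhdsWithin] with ε (hε : 0 < ε)
    exact ⟨x, hx, fun i => by
      have := hle i
      simp only [Pi.add_apply, Pi.smul_apply, Pi.one_apply, smul_eq_mul, mul_one]
      linarith⟩
  refine ⟨w, ?_, ?_, ?_⟩
  · intro i
    have hmem' : Pi.single i (1:ℝ) ∈ closure A := by
      refine hmemclos _ ⟨xstar, hmem, fun j => ?_⟩
      simp [Pi.single_apply]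
      split <;> norm_num
    have := hclos _ hmem'
    rwa [hw]
  · intro hw0
    have h1A : (1 : Fin N → ℝ) ∈ A := ⟨xstar, hmem, fun i => by simp⟩
    have h := hg _ h1A
    rw [grepr] at h
    have hz : ∀ i, g (Pi.single i 1) = 0 := fun i => congrFun hw0 i
    simp [hz] at h
  · intro x hx
    have hz : (fun i => f i x - f i xstar) ∈ closure A :=
      hmemclos _ ⟨x, hx, fun i => le_rfl⟩
    have := hclos _ hz
    rw [grepr] at this
    have hsum : ∑ i, (f i x - f i xstar) * w i
        = ∑ i, w i * f i x - ∑ i, w i * f i xstar := by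
      rw [← Finset.sum_sub_distrib]
      congr 1; funext i; ring
    rw [hw] at hsum
    linarith [hsum ▸ this]
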